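/- arXiv:2005.00926 — 4 statements merged into one kernel-verified Lean document; each statement's English description precedes it below -/
import Mathlib

section
/- Let D ≥ 1, let μ ∈ ℝ, σ > 0, and let X₀, X₁, …, X_D be i.i.d. random variables with Gaussian distribution N(μ, σ²). Fix a binary pattern b = (b₁, …, b_D) ∈ {0,1}^D and let k = Σ_{j=1}^D b_j. Then the probability of the static pattern event, P( ⋂_{j=1}^D { X_D >^{b_j} X_{D−j} } ) — where X_D >^{b_j} X_{D−j} means X_D > X_{D−j} if b_j = 1 and X_D ≤ X_{D−j} if b_j = 0 — equals the beta function value B(k+1, D−k+1) = k!·(D−k)! / (D+1)!. -/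
open MeasureTheory ProbabilityTheory

/-- The beta function `B(a,b) = Γ(a)Γ(b)/Γ(a+b)`. -/
noncomputable def betaFn (a b : ℝ) : ℝ := Real.Gamma a * Real.Gamma b / Real.Gamma (a + b)

/-- `cmpB b x y` means `x > y` if `b = 1` and `x ≤ y` if `b = 0`. -/
def cmpB (b : Bool) (x y : ℝ) : Prop := if b then x > y else x ≤ y

/-!
Conditioning on `X_D = y`, the other samples satisfy their comparisons independently, with
probability `F y` or `1 - F y`, where `F` is the common cdf; so the pattern has probability
`E[F(X_D)^k (1 - F(X_D))^(D-k)]`. The law has no atoms, so `F` is continuous and `F(X_D)` is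
uniform on `[0, 1]`; the expectation is therefore the beta integral `∫₀¹ u^k (1-u)^(D-k) du`.
-/

open Set Filter Topology
open scoped ENNReal Nat Finset

theorem integral_pow_mul_one_sub_pow (k m : ℕ) :
    ∫ u in (0 : ℝ)..1, u ^ k * (1 - u) ^ m = beta (k + 1) (m + 1) := by
  rw [beta_eq_betaIntegralReal _ _ (by positivity) (by positivity), Complex.betaIntegral]
  push_cast
  simp only [add_sub_cancel_right, Complex.cpow_natCast]
  norm_cast
  rw [intervalIntegral.integral_ofReal, Complex.ofReal_re]

namespace ProbabilityTheory

theorem beta_natCast_add_one (k m : ℕ) :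
    beta (k + 1) (m + 1) = k ! * m ! / (k + m + 1)! := by
  have h : (k + 1 : ℝ) + (m + 1) = ((k + m + 1 : ℕ) : ℝ) + 1 := by push_cast; ring
  rw [beta, h, Real.Gamma_nat_eq_factorial, Real.Gamma_nat_eq_factorial,
    Real.Gamma_nat_eq_factorial]

variable {μ : Measure ℝ} [IsProbabilityMeasure μ] [NullSingletonClass μ]

theorem continuous_cdf : Continuous (cdf μ) := by
  refine continuous_iff_continuousAt.2 fun x => ?_
  rw [continuousAt_iff_continuous_left'_right']
  refine ⟨?_, ((cdf μ).right_continuous x).mono Ioi_subset_Ici_self⟩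
  rw [(monotone_cdf μ).continuousWithinAt_Iio_iff_leftLim_eq]
  have h := (cdf μ).measure_singleton x
  rw [measure_cdf, measure_singleton, eq_comm, ENNReal.ofReal_eq_zero] at h
  exact le_antisymm ((monotone_cdf μ).leftLim_le le_rfl) (by linarith)

theorem measure_Iio_eq_ofReal_cdf (x : ℝ) : μ (Iio x) = ENNReal.ofReal (cdf μ x) := by
  rw [measure_congr Iio_ae_eq_Iic, ofReal_cdf]

theorem measure_Ici_eq_ofReal_one_sub_cdf (x : ℝ) :
    μ (Ici x) = ENNReal.ofReal (1 - cdf μ x) := by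
  rw [← compl_Iio, prob_compl_eq_one_sub measurableSet_Iio, measure_Iio_eq_ofReal_cdf,
    ← ENNReal.ofReal_one, ENNReal.ofReal_sub _ (cdf_nonneg μ x)]

theorem measure_setOf_cdf_le {u : ℝ} (hu : u < 1) :
    μ {y | cdf μ y ≤ u} = ENNReal.ofReal u := by
  set S := {y | cdf μ y ≤ u}
  rcases S.eq_empty_or_nonempty with hS | hS
  · have hu0 : u ≤ 0 :=
      ge_of_tendsto' (tendsto_cdf_atBot μ) fun y => le_of_lt (not_le.1 fun hy => hS.subset hy)
    rw [hS, measure_empty, ENNReal.ofReal_of_nonpos hu0]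
  obtain ⟨y₀, hy₀⟩ :=
    ((tendsto_cdf_atTop μ).eventually (eventually_gt_nhds hu)).exists_forall_of_atTop
  have hbdd : BddAbove S := ⟨y₀, fun y hy => le_of_not_ge fun h => (hy₀ y h).not_ge hy⟩
  set s := sSup S
  have hs : s ∈ S := (isClosed_le continuous_cdf continuous_const).csSup_mem hS hbdd
  have hSeq : S = Iic s :=
    Subset.antisymm (fun y hy => le_csSup hbdd hy) fun y hy => (monotone_cdf μ hy).trans hs
  have hFs : cdf μ s = u := by
    refine le_antisymm hs (ge_of_tendsto (continuous_cdf.continuousWithinAt (s := Ioi s)) ?_)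
    filter_upwards [self_mem_nhdsWithin] with y hy
    exact le_of_lt (not_le.1 fun h => (not_le.2 hy) (le_csSup hbdd h))
  rw [hSeq, ← ofReal_cdf, hFs]

theorem map_cdf_eq_restrict_Ioc : μ.map (cdf μ) = volume.restrict (Ioc 0 1) := by
  refine Measure.ext_of_Iic _ _ fun u => ?_
  rw [Measure.map_apply (monotone_cdf μ).measurable measurableSet_Iic,
    Measure.restrict_apply measurableSet_Iic]
  rcases lt_or_ge u 1 with hu | hu
  · rw [Iic_inter_Ioc_of_le hu.le, Real.volume_Ioc, sub_zero]
    exact measure_setOf_cdf_le hu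
  · have h : cdf μ ⁻¹' Iic u = univ := eq_univ_of_forall fun y => (cdf_le_one μ y).trans hu
    rw [h, measure_univ, inter_eq_right.2 (Ioc_subset_Iic_self.trans (Iic_subset_Iic.2 hu)),
      Real.volume_Ioc, sub_zero, ENNReal.ofReal_one]

theorem lintegral_comp_cdf {g : ℝ → ℝ≥0∞} (hg : Measurable g) :
    ∫⁻ y, g (cdf μ y) ∂μ = ∫⁻ u in Ioc 0 1, g u := by
  rw [← lintegral_map hg (monotone_cdf μ).measurable, map_cdf_eq_restrict_Ioc]

theorem lintegral_cdf_pow_mul_one_sub_cdf_pow (k m : ℕ) :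
    ∫⁻ y, ENNReal.ofReal (cdf μ y ^ k * (1 - cdf μ y) ^ m) ∂μ =
      ENNReal.ofReal (beta (k + 1) (m + 1)) := by
  rw [lintegral_comp_cdf (g := fun u => ENNReal.ofReal (u ^ k * (1 - u) ^ m)) (by fun_prop),
    ← integral_pow_mul_one_sub_pow, intervalIntegral.integral_of_le zero_le_one,
    ofReal_integral_eq_lintegral_ofReal (by fun_prop : Continuous _).integrableOn_Ioc]
  exact ae_restrict_of_forall_mem measurableSet_Ioc fun u hu =>
    mul_nonneg (pow_nonneg hu.1.le k) (pow_nonneg (sub_nonneg.2 hu.2) m)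

theorem measure_forall_castSucc_mem_of_iIndepFun {Ω α : Type*} [MeasurableSpace Ω]
    [MeasurableSpace α] {P : Measure Ω} [IsProbabilityMeasure P] {ν : Measure α} {n : ℕ}
    {X : Fin (n + 1) → Ω → α} (hX : ∀ i, Measurable (X i)) (hindep : iIndepFun X P)
    (hlaw : ∀ i, P.map (X i) = ν) (s : Fin n → α → Set α)
    (hs : ∀ i, MeasurableSet {p : α × α | p.2 ∈ s i p.1}) :
    P {ω | ∀ i : Fin n, X i.castSucc ω ∈ s i (X (Fin.last n) ω)} =
      ∫⁻ y, ∏ i, ν (s i y) ∂ν := by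
  have : IsProbabilityMeasure ν := hlaw 0 ▸ Measure.isProbabilityMeasure_map (hX 0).aemeasurable
  have hjoint : P.map (fun ω i => X i ω) = Measure.pi fun _ => ν := by
    rw [(iIndepFun_iff_map_fun_eq_pi_map fun i => (hX i).aemeasurable).1 hindep]
    simp_rw [hlaw]
  set T := {x : Fin (n + 1) → α | ∀ i, x i.castSucc ∈ s i (x (Fin.last n))}
  have hT : MeasurableSet T := by
    simp only [T, ofPred_forall]
    exact .iInter fun i => (hs i).preimage
      (f := fun x : Fin (n + 1) → α => (x (Fin.last n), x i.castSucc)) (by fun_prop)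
  change P ((fun ω i => X i ω) ⁻¹' T) = _
  rw [← Measure.map_apply (by fun_prop) hT, hjoint]
  set e := MeasurableEquiv.piFinSuccAbove (fun _ : Fin (n + 1) => α) (Fin.last n)
  rw [← ((measurePreserving_piFinSuccAbove (fun _ => ν) (Fin.last n)).symm e).measure_preimage
    hT.nullMeasurableSet, Measure.prod_apply (e.symm.measurable hT)]
  refine lintegral_congr fun y => ?_
  rw [← Measure.pi_pi]
  congr 1
  ext z
  simp [T, e, MeasurableEquiv.piFinSuccAbove_symm_apply]

theorem measure_setOf_forall_cmpB_of_iIndepFun {Ω : Type*} [MeasurableSpace Ω]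
    {P : Measure Ω} [IsProbabilityMeasure P] {ν : Measure ℝ} [NullSingletonClass ν] {n : ℕ}
    {X : Fin (n + 1) → Ω → ℝ} (hX : ∀ i, Measurable (X i)) (hindep : iIndepFun X P)
    (hlaw : ∀ i, P.map (X i) = ν) (b : Fin n → Bool) :
    P {ω | ∀ j, cmpB (b j) (X (Fin.last n) ω) (X j.rev.castSucc ω)} =
      ENNReal.ofReal (beta (#{j | b j} + 1) (#{j | ¬b j} + 1)) := by
  have : IsProbabilityMeasure ν := hlaw 0 ▸ Measure.isProbabilityMeasure_map (hX 0).aemeasurable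
  have hmeas (bb : Bool) : MeasurableSet {p : ℝ × ℝ | p.2 ∈ {t | cmpB bb p.1 t}} := by
    cases bb
    · exact measurableSet_le measurable_fst measurable_snd
    · exact measurableSet_lt measurable_snd measurable_fst
  have hprob (bb : Bool) (y : ℝ) : ν {t | cmpB bb y t} =
      if bb then ENNReal.ofReal (cdf ν y) else ENNReal.ofReal (1 - cdf ν y) := by
    cases bb
    · exact measure_Ici_eq_ofReal_one_sub_cdf y
    · exact measure_Iio_eq_ofReal_cdf y
  calc P {ω | ∀ j, cmpB (b j) (X (Fin.last n) ω) (X j.rev.castSucc ω)}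
      = P {ω | ∀ i : Fin n, X i.castSucc ω ∈ {t | cmpB (b i.rev) (X (Fin.last n) ω) t}} := by
        congr 1
        ext ω
        exact Fin.rev_surjective.forall.trans (by simp only [Fin.rev_rev, mem_ofPred_eq])
    _ = ∫⁻ y, ∏ i : Fin n, ν {t | cmpB (b i.rev) y t} ∂ν :=
        measure_forall_castSucc_mem_of_iIndepFun hX hindep hlaw _ fun i => hmeas _
    _ = ∫⁻ y, ENNReal.ofReal (cdf ν y ^ #{j | b j} * (1 - cdf ν y) ^ #{j | ¬b j}) ∂ν := by
        refine lintegral_congr fun y => ?_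
        rw [Fintype.prod_equiv Fin.revPerm (fun i => ν {t | cmpB (b i.rev) y t})
          (fun j => ν {t | cmpB (b j) y t}) fun _ => rfl]
        simp_rw [hprob, Finset.prod_ite, Finset.prod_const]
        rw [ENNReal.ofReal_mul (pow_nonneg (cdf_nonneg ν y) _),
          ENNReal.ofReal_pow (cdf_nonneg ν y), ENNReal.ofReal_pow (sub_nonneg.2 (cdf_le_one ν y))]
    _ = _ := lintegral_cdf_pow_mul_one_sub_cdf_pow _ _

end ProbabilityTheory

theorem static_pattern_probability_general
    {Ω : Type*} [MeasurableSpace Ω] (P : Measure Ω) [IsProbabilityMeasure P]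
    (D : ℕ) (μ σ : ℝ) (hσ : 0 < σ)
    (X : Fin (D + 1) → Ω → ℝ) (hmeas : ∀ i, Measurable (X i))
    (hindep : iIndepFun X P)
    (hdist : ∀ i, Measure.map (X i) P = gaussianReal μ ⟨σ ^ 2, sq_nonneg σ⟩)
    (b : Fin D → Bool) (k : ℕ) (hk : k = ∑ j, if b j then 1 else 0) :
    (P (⋂ j : Fin D, {ω | cmpB (b j)
        (X ⟨D, Nat.lt_succ_self D⟩ ω)
        (X ⟨D - (j.val + 1), Nat.lt_succ_of_le (Nat.sub_le _ _)⟩ ω)})).toReal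
      = betaFn ((k : ℝ) + 1) ((D : ℝ) - (k : ℝ) + 1) ∧
    betaFn ((k : ℝ) + 1) ((D : ℝ) - (k : ℝ) + 1)
      = ((Nat.factorial k : ℝ) * (Nat.factorial (D - k) : ℝ)) / (Nat.factorial (D + 1) : ℝ) := by
  have : NullSingletonClass (gaussianReal μ ⟨σ ^ 2, sq_nonneg σ⟩) :=
    nullSingletonClass_gaussianReal (ne_of_gt (show (0 : ℝ) < σ ^ 2 by positivity))
  have hk' : k = #{j | b j} := by rw [hk, Finset.sum_boole]; rfl
  have hkm : k + #{j | ¬b j} = D := by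
    rw [hk', Finset.card_filter_add_card_filter_not, Finset.card_univ, Fintype.card_fin]
  have hm : #{j | ¬b j} = D - k := by omega
  have hbeta : betaFn (k + 1) (D - k + 1) = beta (k + 1) (#{j | ¬b j} + 1) := by
    rw [hm, Nat.cast_sub (by omega)]
    rfl
  refine ⟨?_, ?_⟩
  · rw [hbeta, ← ENNReal.toReal_ofReal (beta_pos (by positivity) (by positivity)).le, hk',
      ← measure_setOf_forall_cmpB_of_iIndepFun hmeas hindep hdist b, iInter_ofPred]
    -- `⟨D, _⟩` is `Fin.last D` and `⟨D - (j + 1), _⟩` is `j.rev.castSucc`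
    rfl
  · rw [hbeta, beta_natCast_add_one, hm, Nat.add_sub_of_le (by omega)]

/-- for i.i.d. Gaussian samples `X₀, …, X_D`, the probability of the static
pattern event `⋂_{j=1}^D {X_D >^{b_j} X_{D-j}}` equals
`B(k+1, D-k+1) = k!·(D-k)!/(D+1)!` where `k = Σ_j b_j`. -/
theorem static_pattern_probability
    {Ω : Type*} [MeasurableSpace Ω] (P : Measure Ω) [IsProbabilityMeasure P]
    (D : ℕ) (hD : 1 ≤ D) (μ σ : ℝ) (hσ : 0 < σ)
    (X : Fin (D + 1) → Ω → ℝ) (hmeas : ∀ i, Measurable (X i))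
    (hindep : iIndepFun X P)
    (hdist : ∀ i, Measure.map (X i) P = gaussianReal μ ⟨σ ^ 2, sq_nonneg σ⟩)
    (b : Fin D → Bool) (k : ℕ) (hk : k = ∑ j, if b j then 1 else 0) :
    (P (⋂ j : Fin D, {ω | cmpB (b j)
        (X ⟨D, Nat.lt_succ_self D⟩ ω)
        (X ⟨D - (j.val + 1), Nat.lt_succ_of_le (Nat.sub_le _ _)⟩ ω)})).toReal
      = betaFn ((k : ℝ) + 1) ((D : ℝ) - (k : ℝ) + 1) ∧
    betaFn ((k : ℝ) + 1) ((D : ℝ) - (k : ℝ) + 1)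
      = ((Nat.factorial k : ℝ) * (Nat.factorial (D - k) : ℝ)) / (Nat.factorial (D + 1) : ℝ) :=
  static_pattern_probability_general P D μ σ hσ X hmeas hindep hdist b k hk
end

section
/- Let D ≥ 1, let μ ∈ ℝ, σ > 0, and let X₀, X₁, …, X_D be i.i.d. random variables with distribution N(μ, σ²). Fix a pattern b = (b₁, …, b_D) ∈ {0,1}^D with k = Σ_{j=1}^D b_j, and set α = k+1, β = D−k+1. Then for every real t, P( {X_D ≤ t} ∩ ⋂_{j=1}^D { X_D >^{b_j} X_{D−j} } ) = B(α,β) · ∫_{−∞}^{t} BN(α,β,μ,σ)(x) dx. Equivalently, the conditional density of X_D given the static pattern event is the beta-normal density BN(α, β, μ, σ). -/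
open MeasureTheory ProbabilityTheory
open scoped NNReal ENNReal

/-- The standard normal p.d.f. `φ`. -/
noncomputable def stdPhi (x : ℝ) : ℝ := Real.exp (-(x ^ 2) / 2) / Real.sqrt (2 * Real.pi)

/-- The standard normal c.d.f. `Φ`. -/
noncomputable def stdCDF (x : ℝ) : ℝ := ∫ t in Set.Iic x, stdPhi t

instance gaussianReal_sq_isProb (μ σ : ℝ) : IsProbabilityMeasure (gaussianReal μ ⟨σ^2, sq_nonneg σ⟩) :=
  show IsProbabilityMeasure (gaussianReal μ (NNReal.mk (σ^2) (sq_nonneg σ))) from inferInstance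

lemma stdPhi_eq : stdPhi = gaussianPDFReal 0 1 := by
  ext x
  simp only [stdPhi, gaussianPDFReal, NNReal.coe_one, mul_one, sub_zero]
  rw [div_eq_inv_mul]

lemma stdPhi_nonneg (x : ℝ) : 0 ≤ stdPhi x := by unfold stdPhi; positivity

lemma integrable_stdPhi : Integrable stdPhi := stdPhi_eq ▸ integrable_gaussianPDFReal 0 1

lemma stdCDF_nonneg (a : ℝ) : 0 ≤ stdCDF a :=
  setIntegral_nonneg measurableSet_Iic fun x _ => stdPhi_nonneg x

lemma gaussianReal_std_Iic (a : ℝ) :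
    gaussianReal 0 1 (Set.Iic a) = ENNReal.ofReal (stdCDF a) := by
  rw [gaussianReal_apply_eq_integral 0 one_ne_zero]
  unfold stdCDF; rw [stdPhi_eq]

lemma stdCDF_le_one (a : ℝ) : stdCDF a ≤ 1 := by
  have h := prob_le_one (μ := gaussianReal 0 1) (s := Set.Iic a)
  rw [gaussianReal_std_Iic] at h
  exact (ENNReal.ofReal_le_one).mp h

lemma monotone_stdCDF : Monotone stdCDF := fun a b hab =>
  setIntegral_mono_set integrable_stdPhi.integrableOn
    (ae_of_all _ fun x => stdPhi_nonneg x)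
    ((Set.Iic_subset_Iic.2 hab).eventuallyLE)

lemma measurable_stdCDF : Measurable stdCDF := monotone_stdCDF.measurable

lemma gaussianReal_scaled_Iic {μ σ : ℝ} (hσ : 0 < σ) (x : ℝ) :
    gaussianReal μ ⟨σ^2, sq_nonneg σ⟩ (Set.Iic x) = ENNReal.ofReal (stdCDF ((x - μ)/σ)) := by
  have hmap : Measure.map (fun y => σ * y + μ) (gaussianReal 0 1)
      = gaussianReal μ ⟨σ^2, sq_nonneg σ⟩ := by
    have h1 : (fun y : ℝ => σ * y + μ) = (· + μ) ∘ (σ * ·) := rfl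
    rw [h1, ← Measure.map_map (measurable_id'.add_const μ) (measurable_const_mul σ),
      gaussianReal_map_const_mul, gaussianReal_map_add_const]
    norm_num
    rfl
  rw [← hmap, Measure.map_apply (by fun_prop) measurableSet_Iic]
  have hpre : (fun y : ℝ => σ * y + μ) ⁻¹' Set.Iic x = Set.Iic ((x - μ)/σ) := by
    ext y
    simp only [Set.mem_preimage, Set.mem_Iic, le_div_iff₀ hσ]
    constructor <;> intro h <;> nlinarith
  rw [hpre, gaussianReal_std_Iic]

lemma var_ne_zero {σ : ℝ} (hσ : 0 < σ) : (⟨σ^2, sq_nonneg σ⟩ : ℝ≥0) ≠ 0 := by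
  intro h
  have h' : σ^2 = 0 := congrArg NNReal.toReal h
  exact (pow_ne_zero 2 hσ.ne') h'

lemma gaussianReal_scaled_Iio {μ σ : ℝ} (hσ : 0 < σ) (x : ℝ) :
    gaussianReal μ ⟨σ^2, sq_nonneg σ⟩ (Set.Iio x) = ENNReal.ofReal (stdCDF ((x - μ)/σ)) := by
  have hsing : gaussianReal μ ⟨σ^2, sq_nonneg σ⟩ {x} = 0 :=
    gaussianReal_absolutelyContinuous μ (var_ne_zero hσ) (measure_singleton x)
  rw [← gaussianReal_scaled_Iic hσ]
  refine le_antisymm (measure_mono Set.Iio_subset_Iic_self) ?_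
  calc gaussianReal μ ⟨σ^2, sq_nonneg σ⟩ (Set.Iic x)
      = gaussianReal μ ⟨σ^2, sq_nonneg σ⟩ (Set.Iio x ∪ {x}) := by rw [Set.Iio_union_right]
    _ ≤ gaussianReal μ ⟨σ^2, sq_nonneg σ⟩ (Set.Iio x)
        + gaussianReal μ ⟨σ^2, sq_nonneg σ⟩ {x} := measure_union_le _ _
    _ = gaussianReal μ ⟨σ^2, sq_nonneg σ⟩ (Set.Iio x) := by rw [hsing, add_zero]

lemma gaussianReal_scaled_Ici {μ σ : ℝ} (hσ : 0 < σ) (x : ℝ) :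
    gaussianReal μ ⟨σ^2, sq_nonneg σ⟩ (Set.Ici x)
      = ENNReal.ofReal (1 - stdCDF ((x - μ)/σ)) := by
  rw [← Set.compl_Iio, prob_compl_eq_one_sub measurableSet_Iio, gaussianReal_scaled_Iio hσ,
    ENNReal.ofReal_sub _ (stdCDF_nonneg _), ENNReal.ofReal_one]

lemma gaussianPDFReal_scaled {μ σ : ℝ} (hσ : 0 < σ) (x : ℝ) :
    (1/σ) * stdPhi ((x - μ)/σ) = gaussianPDFReal μ ⟨σ^2, sq_nonneg σ⟩ x := by
  simp only [stdPhi, gaussianPDFReal, NNReal.coe_mk]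
  have h2 : Real.sqrt (2 * Real.pi * σ^2) = Real.sqrt (2 * Real.pi) * σ := by
    rw [Real.sqrt_mul (by positivity), Real.sqrt_sq hσ.le]
  change _ = (Real.sqrt (2 * Real.pi * σ^2))⁻¹ * Real.exp (-(x - μ)^2 / (2 * σ^2))
  rw [h2]
  have h3 : -((x - μ)/σ)^2/2 = -(x-μ)^2/(2*σ^2) := by
    rw [div_pow]; ring
  rw [h3, mul_inv]
  ring

/-- The beta-normal density `BN(a,b,μ,σ)`. -/
noncomputable def BN (a b μ σ : ℝ) (x : ℝ) : ℝ :=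
  (1 / betaFn a b) * stdCDF ((x - μ) / σ) ^ (a - 1) *
    (1 - stdCDF ((x - μ) / σ)) ^ (b - 1) * ((1 / σ) * stdPhi ((x - μ) / σ))

/-- for i.i.d. Gaussian samples `X₀, …, X_D` and a static pattern `b` with
`k = Σ_j b_j`, `α = k+1`, `β = D-k+1`, we have for every real `t`
`P({X_D ≤ t} ∩ static pattern event) = B(α,β) · ∫_{-∞}^t BN(α,β,μ,σ)(x) dx`,
i.e. the conditional density of `X_D` given the static pattern is beta-normal. -/
theorem static_pattern_conditional_density
    {Ω : Type*} [MeasurableSpace Ω] (P : Measure Ω) [IsProbabilityMeasure P]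
    (D : ℕ) (hD : 1 ≤ D) (μ σ : ℝ) (hσ : 0 < σ)
    (X : Fin (D + 1) → Ω → ℝ) (hmeas : ∀ i, Measurable (X i))
    (hindep : iIndepFun X P)
    (hdist : ∀ i, Measure.map (X i) P = gaussianReal μ ⟨σ ^ 2, sq_nonneg σ⟩)
    (b : Fin D → Bool) (k : ℕ) (hk : k = ∑ j, if b j then 1 else 0)
    (α β : ℝ) (hα : α = (k : ℝ) + 1) (hβ : β = (D : ℝ) - (k : ℝ) + 1) :
    ∀ t : ℝ,
      (P ({ω | X ⟨D, Nat.lt_succ_self D⟩ ω ≤ t} ∩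
          ⋂ j : Fin D, {ω | cmpB (b j)
            (X ⟨D, Nat.lt_succ_self D⟩ ω)
            (X ⟨D - (j.val + 1), Nat.lt_succ_of_le (Nat.sub_le _ _)⟩ ω)})).toReal
        = betaFn α β * ∫ x in Set.Iic t, BN α β μ σ x := by
  intro t
  have hv : (⟨σ ^ 2, sq_nonneg σ⟩ : ℝ≥0) ≠ 0 := var_ne_zero hσ
  set ν : Measure ℝ := gaussianReal μ ⟨σ ^ 2, sq_nonneg σ⟩ with hν
  -- k ≤ D
  have hkD : k ≤ D := by
    rw [hk]
    calc ∑ j : Fin D, (if b j then 1 else 0) ≤ ∑ _j : Fin D, 1 :=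
          Finset.sum_le_sum fun i _ => by split <;> omega
      _ = D := by simp
  -- the reversal involution
  set r : Fin D → Fin D := fun j => ⟨D - (j.val + 1), by omega⟩ with hr
  have hrr : ∀ j, r (r j) = j := by
    intro j
    have hj := j.isLt
    apply Fin.ext
    simp only [hr]
    omega
  -- Φ and g
  set Φ : ℝ → ℝ := fun x => stdCDF ((x - μ) / σ) with hΦdef
  have hΦmeas : Measurable Φ := measurable_stdCDF.comp ((measurable_id.sub_const μ).div_const σ)
  have hΦ0 : ∀ x, 0 ≤ Φ x := fun x => stdCDF_nonneg _
  have hΦ1 : ∀ x, Φ x ≤ 1 := fun x => stdCDF_le_one _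
  set g : ℝ → ℝ := fun x => Φ x ^ k * (1 - Φ x) ^ (D - k) with hgdef
  have hg0 : ∀ x, 0 ≤ g x := fun x =>
    mul_nonneg (pow_nonneg (hΦ0 x) _) (pow_nonneg (by linarith [hΦ1 x]) _)
  have hgmeas : Measurable g :=
    (hΦmeas.pow_const _).mul ((measurable_const.sub hΦmeas).pow_const _)
  -- joint law is the product measure
  have hYmeas : Measurable (fun ω (i : Fin (D+1)) => X i ω) := measurable_pi_lambda _ hmeas
  have hjoint : Measure.map (fun ω (i : Fin (D+1)) => X i ω) P
      = Measure.pi (fun _ : Fin (D+1) => ν) := by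
    refine (Measure.pi_eq (μ := fun _ : Fin (D+1) => ν) fun s hs => ?_).symm
    rw [Measure.map_apply hYmeas (MeasurableSet.univ_pi hs)]
    have hpre : (fun ω (i : Fin (D+1)) => X i ω) ⁻¹' Set.pi Set.univ s = ⋂ i, X i ⁻¹' s i := by
      ext ω; simp [Set.mem_pi]
    rw [hpre, hindep.meas_iInter fun i => ⟨s i, hs i, rfl⟩]
    exact Finset.prod_congr rfl fun i _ => by
      rw [← Measure.map_apply (hmeas i) (hs i), hdist i]
  -- the event as a preimage
  set S : Set (Fin (D+1) → ℝ) :=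
    {f | f (Fin.last D) ≤ t ∧
      ∀ j : Fin D, cmpB (b j) (f (Fin.last D)) (f ((r j).castSucc))} with hS
  have hSm : MeasurableSet S := by
    have h1 : MeasurableSet {f : Fin (D+1) → ℝ | f (Fin.last D) ≤ t} :=
      measurableSet_le (measurable_pi_apply _) measurable_const
    have h2 : ∀ j : Fin D, MeasurableSet
        {f : Fin (D+1) → ℝ | cmpB (b j) (f (Fin.last D)) (f ((r j).castSucc))} := by
      intro j
      cases hbj : b j
      · have hm : MeasurableSet {f : Fin (D+1) → ℝ | f (Fin.last D) ≤ f ((r j).castSucc)} :=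
          measurableSet_le (measurable_pi_apply _) (measurable_pi_apply _)
        simpa [cmpB, hbj] using hm
      · have hm : MeasurableSet {f : Fin (D+1) → ℝ | f ((r j).castSucc) < f (Fin.last D)} :=
          measurableSet_lt (measurable_pi_apply _) (measurable_pi_apply _)
        simpa [cmpB, hbj] using hm
    have : S = {f : Fin (D+1) → ℝ | f (Fin.last D) ≤ t} ∩
        ⋂ j : Fin D, {f | cmpB (b j) (f (Fin.last D)) (f ((r j).castSucc))} := by
      ext f; simp [hS, Set.mem_iInter]
    rw [this]
    exact h1.inter (MeasurableSet.iInter h2)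
  have hev : ({ω | X ⟨D, Nat.lt_succ_self D⟩ ω ≤ t} ∩
          ⋂ j : Fin D, {ω | cmpB (b j)
            (X ⟨D, Nat.lt_succ_self D⟩ ω)
            (X ⟨D - (j.val + 1), Nat.lt_succ_of_le (Nat.sub_le _ _)⟩ ω)})
      = (fun ω (i : Fin (D+1)) => X i ω) ⁻¹' S := by
    ext ω
    simp only [Set.mem_inter_iff, Set.mem_setOf_eq, Set.mem_iInter, Set.mem_preimage, hS]
    exact Iff.rfl
  rw [hev, ← Measure.map_apply hYmeas hSm, hjoint]
  -- step to the product measure, splitting off the last coordinate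
  set π₀ : Measure (Fin D → ℝ) := Measure.pi (fun _ : Fin D => ν) with hπ₀
  set T : Set (ℝ × (Fin D → ℝ)) :=
    {p | p.1 ≤ t ∧ ∀ j : Fin D, cmpB (b j) p.1 (p.2 (r j))} with hT
  have hTm : MeasurableSet T := by
    have h1 : MeasurableSet {p : ℝ × (Fin D → ℝ) | p.1 ≤ t} :=
      measurableSet_le measurable_fst measurable_const
    have h2 : ∀ j : Fin D, MeasurableSet
        {p : ℝ × (Fin D → ℝ) | cmpB (b j) p.1 (p.2 (r j))} := by
      intro j
      cases hbj : b j
      · have hm : MeasurableSet {p : ℝ × (Fin D → ℝ) | p.1 ≤ p.2 (r j)} :=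
          measurableSet_le measurable_fst (by fun_prop)
        simpa [cmpB, hbj] using hm
      · have hm : MeasurableSet {p : ℝ × (Fin D → ℝ) | p.2 (r j) < p.1} :=
          measurableSet_lt (by fun_prop) measurable_fst
        simpa [cmpB, hbj] using hm
    have hTeq : T = {p : ℝ × (Fin D → ℝ) | p.1 ≤ t} ∩
        ⋂ j, {p | cmpB (b j) p.1 (p.2 (r j))} := by
      ext p; simp [hT, Set.mem_iInter]
    rw [hTeq]; exact h1.inter (MeasurableSet.iInter h2)
  have hpiS : Measure.pi (fun _ : Fin (D+1) => ν) S = (ν.prod π₀) T := by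
    rw [← (measurePreserving_piFinSuccAbove (fun _ : Fin (D+1) => ν) (Fin.last D)).map_eq,
      Measure.map_apply (MeasurableEquiv.measurable _) hTm]
    congr 1
    ext f
    simp [hS, hT, MeasurableEquiv.piFinSuccAbove_apply, Fin.init]
  rw [hpiS]
  -- compute sections of T
  have hIio : ∀ x : ℝ, ν (Set.Iio x) = ENNReal.ofReal (Φ x) :=
    fun x => gaussianReal_scaled_Iio hσ x
  have hIci : ∀ x : ℝ, ν (Set.Ici x) = ENNReal.ofReal (1 - Φ x) :=
    fun x => gaussianReal_scaled_Ici hσ x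
  have hsec : ∀ x : ℝ, π₀ (Prod.mk x ⁻¹' T)
      = (Set.Iic t).indicator (fun x => ENNReal.ofReal (g x)) x := by
    intro x
    by_cases hx : x ≤ t
    · rw [Set.indicator_of_mem (Set.mem_Iic.mpr hx)]
      have hTx : Prod.mk x ⁻¹' T
          = Set.pi Set.univ (fun i => if b (r i) then Set.Iio x else Set.Ici x) := by
        ext w
        simp only [hT, Set.mem_preimage, Set.mem_setOf_eq, Set.mem_pi, Set.mem_univ,
          true_implies]
        constructor
        · rintro ⟨-, h⟩ i
          have h2 := h (r i)
          rw [hrr] at h2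
          cases hb : b (r i) <;> rw [hb] at h2 <;> simp [cmpB] at h2 <;> simp [hb, h2]
        · intro h
          refine ⟨hx, fun j => ?_⟩
          have h2 := h (r j)
          rw [hrr] at h2
          cases hb : b j <;> rw [hb] at h2 <;> simp at h2 <;> simp [cmpB, h2]
      rw [hTx, hπ₀, Measure.pi_pi]
      have hprodeq : ∏ i : Fin D, ν (if b (r i) then Set.Iio x else Set.Ici x)
          = ∏ i : Fin D, ν (if b i then Set.Iio x else Set.Ici x) := by
        refine Fintype.prod_equiv (Function.Involutive.toPerm r hrr) _ _ fun i => ?_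
        rfl
      rw [hprodeq]
      have hite : ∀ i : Fin D, ν (if b i then Set.Iio x else Set.Ici x)
          = if b i then ENNReal.ofReal (Φ x) else ENNReal.ofReal (1 - Φ x) := by
        intro i; cases hb : b i <;> simp [hb, hIio x, hIci x]
      rw [Finset.prod_congr rfl fun i _ => hite i, Finset.prod_ite, Finset.prod_const,
        Finset.prod_const]
      have hcard1 : (Finset.univ.filter fun i : Fin D => b i = true).card = k := by
        rw [hk]
        simp [Finset.sum_boole]
      have hcard2 : (Finset.univ.filter fun i : Fin D => ¬ (b i = true)).card = D - k := by
        have h3 := Finset.card_filter_add_card_filter_not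
          (s := (Finset.univ : Finset (Fin D))) (p := fun i => b i = true)
        rw [hcard1, Finset.card_univ, Fintype.card_fin] at h3
        omega
      rw [hcard1, hcard2, hgdef]
      rw [← ENNReal.ofReal_pow (hΦ0 x), ← ENNReal.ofReal_pow (by linarith [hΦ1 x] : (0:ℝ) ≤ 1 - Φ x),
        ← ENNReal.ofReal_mul (pow_nonneg (hΦ0 x) k)]
    · rw [Set.indicator_of_notMem (by simpa [Set.mem_Iic] using hx)]
      have hTx : Prod.mk x ⁻¹' T = ∅ := by
        ext w
        simp only [hT, Set.mem_preimage, Set.mem_setOf_eq, Set.mem_empty_iff_false, iff_false,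
          not_and]
        intro h; exact absurd h hx
      rw [hTx]
      simp
  have hTlint : (ν.prod π₀) T = ∫⁻ x in Set.Iic t, ENNReal.ofReal (g x) ∂ν := by
    rw [Measure.prod_apply hTm, lintegral_congr hsec, lintegral_indicator measurableSet_Iic]
  rw [hTlint]
  have hwd : ∫⁻ x in Set.Iic t, ENNReal.ofReal (g x) ∂ν
      = ∫⁻ x in Set.Iic t, ENNReal.ofReal (g x * gaussianPDFReal μ ⟨σ^2, sq_nonneg σ⟩ x) := by
    rw [hν, gaussianReal_of_var_ne_zero μ hv, restrict_withDensity measurableSet_Iic,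
      lintegral_withDensity_eq_lintegral_mul _ (measurable_gaussianPDF μ ⟨σ^2, sq_nonneg σ⟩)
        hgmeas.ennreal_ofReal]
    refine lintegral_congr fun x => ?_
    simp only [Pi.mul_apply, gaussianPDF]
    rw [← ENNReal.ofReal_mul (gaussianPDFReal_nonneg μ ⟨σ^2, sq_nonneg σ⟩ x), mul_comm]
  rw [hwd]
  have hfin : (∫⁻ x in Set.Iic t,
        ENNReal.ofReal (g x * gaussianPDFReal μ ⟨σ^2, sq_nonneg σ⟩ x)).toReal
      = ∫ x in Set.Iic t, g x * gaussianPDFReal μ ⟨σ^2, sq_nonneg σ⟩ x := by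
    rw [integral_eq_lintegral_of_nonneg_ae
      (ae_of_all _ fun x => mul_nonneg (hg0 x) (gaussianPDFReal_nonneg μ ⟨σ^2, sq_nonneg σ⟩ x))
      ((hgmeas.mul (measurable_gaussianPDFReal μ ⟨σ^2, sq_nonneg σ⟩)).aestronglyMeasurable)]
  rw [hfin]
  -- final pointwise identification with the beta-normal density
  have hbfpos : 0 < betaFn α β := by
    have h1 : (0:ℝ) < α := by rw [hα]; positivity
    have h2 : (0:ℝ) < β := by
      rw [hβ]
      have : (k:ℝ) ≤ D := Nat.cast_le.mpr hkD
      linarith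
    exact div_pos (mul_pos (Real.Gamma_pos_of_pos h1) (Real.Gamma_pos_of_pos h2))
      (Real.Gamma_pos_of_pos (by linarith))
  rw [← integral_const_mul]
  refine integral_congr_ae (ae_of_all _ fun x => ?_)
  show g x * gaussianPDFReal μ ⟨σ^2, sq_nonneg σ⟩ x = betaFn α β * BN α β μ σ x
  rw [BN, ← gaussianPDFReal_scaled hσ]
  have hα1 : α - 1 = ((k : ℕ) : ℝ) := by rw [hα]; ring
  have hβ1 : β - 1 = ((D - k : ℕ) : ℝ) := by rw [hβ, Nat.cast_sub hkD]; ring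
  rw [hα1, hβ1, Real.rpow_natCast, Real.rpow_natCast, hgdef]
  simp only [hΦdef]
  field_simp
end

section
/- Let D ≥ 2, μ ∈ ℝ, σ > 0, and let b = (b₁, …, b_D) ∈ {0,1}^D. The normalized weights Ψ_w(b,K) = Ψ(b,K)·B(α_K, β_K) / Σ_{L ∈ {0,1}^{D−1}} Ψ(b,L)·B(α_L, β_L), with α_K = Σ_j k_j + b₁ + 1 and β_K = D − b₁ − Σ_j k_j + 1, satisfy Σ_{K ∈ {0,1}^{D−1}} Ψ_w(b,K) = 1, provided the denominator Σ_L Ψ(b,L)·B(α_L,β_L) is positive; moreover this denominator is positive for every b ∈ {0,1}^D. -/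
open MeasureTheory

/-- A bit as a real number. -/
def bitR (b : Bool) : ℝ := if b then 1 else 0

/-- The weight function `Ψ` on binary strings, with strings in *reversed* order:
the head of each list is the most recent bit (`b_D`, resp. `k_{D-1}`). -/
noncomputable def PsiL : List Bool → List Bool → ℝ
  | [_], [] => 1
  | [b2, b1], [k1] => if k1 = b1 then 1 / 2 else if b2 ≠ b1 then 1 else 0
  | bD :: brest, kD1 :: kD2 :: krest =>
      PsiL brest (kD2 :: krest) *
        ((1 / 2) * (if kD2 = kD1 then 1 else 0) +
          (if kD2 ≠ kD1 then 1 else 0) *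
            (bitR kD1 * bitR bD + bitR kD2 * (1 - bitR bD)))
  | _, _ => 0

/-- `Ψ(b, K)` for a pattern `b = b₁…b_D` and a string `K = k₁…k_{D-1}`. -/
noncomputable def Psi {D : ℕ} (b : Fin D → Bool) (K : Fin (D - 1) → Bool) : ℝ :=
  PsiL (List.ofFn b).reverse (List.ofFn K).reverse

/-- `α_K = Σ_j k_j + b₁ + 1`. -/
noncomputable def alphaK {D : ℕ} (b1 : Bool) (K : Fin (D - 1) → Bool) : ℝ :=
  (∑ j, bitR (K j)) + bitR b1 + 1

/-- `β_K = D - b₁ - Σ_j k_j + 1`. -/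
noncomputable def betaK (D : ℕ) (b1 : Bool) (K : Fin (D - 1) → Bool) : ℝ :=
  (D : ℝ) - bitR b1 - (∑ j, bitR (K j)) + 1

lemma bitR_nonneg (c : Bool) : 0 ≤ bitR c := by
  unfold bitR; split_ifs <;> norm_num

lemma bitR_le_one (c : Bool) : bitR c ≤ 1 := by
  unfold bitR; split_ifs <;> norm_num

lemma PsiL_nonneg (bs ks : List Bool) : 0 ≤ PsiL bs ks := by
  induction bs, ks using PsiL.induct <;> simp [PsiL, bitR] <;>
    split_ifs <;> simp_all

lemma Psi_nonneg {D : ℕ} (b : Fin D → Bool) (K : Fin (D - 1) → Bool) :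
    0 ≤ Psi b K := PsiL_nonneg _ _

lemma PsiL_cons (bD : Bool) (brest : List Bool) (kD1 kD2 : Bool) (krest : List Bool) :
    PsiL (bD :: brest) (kD1 :: kD2 :: krest) =
      PsiL brest (kD2 :: krest) *
        ((1 / 2) * (if kD2 = kD1 then 1 else 0) +
          (if kD2 ≠ kD1 then 1 else 0) *
            (bitR kD1 * bitR bD + bitR kD2 * (1 - bitR bD))) := by
  rw [PsiL]

lemma PsiL_const_pos (l : List Bool) (x y : Bool) :
    0 < PsiL (l ++ [x, y]) (List.replicate (l.length + 1) y) := by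
  induction l with
  | nil => simp [PsiL]
  | cons a l ih =>
      simp only [List.length_cons, List.cons_append, List.replicate_succ]
      rw [PsiL_cons]
      rw [List.replicate_succ] at ih
      apply mul_pos ih
      simp [bitR]

lemma Psi_const_pos {m : ℕ} (b : Fin (m + 2) → Bool) :
    0 < Psi b (fun _ : Fin (m + 2 - 1) => b 0) := by
  unfold Psi
  have h1 : List.ofFn b = b 0 :: (fun i : Fin (m+1) => b i.succ) 0 ::
      List.ofFn (fun i : Fin m => b i.succ.succ) := by
    rw [List.ofFn_succ, List.ofFn_succ]
  have h2 : List.ofFn (fun _ : Fin (m + 2 - 1) => b 0) = List.replicate (m + 1) (b 0) :=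
    List.ofFn_const _ _
  rw [h1, h2, List.reverse_replicate, List.reverse_cons, List.reverse_cons,
    List.append_assoc]
  have hl : (List.ofFn (fun i : Fin m => b i.succ.succ)).reverse.length = m := by simp
  have := PsiL_const_pos (List.ofFn (fun i : Fin m => b i.succ.succ)).reverse
    ((fun i : Fin (m+1) => b i.succ) 0) (b 0)
  rw [hl] at this
  simpa using this

lemma betaFn_pos {a c : ℝ} (ha : 0 < a) (hc : 0 < c) : 0 < betaFn a c :=
  div_pos (mul_pos (Real.Gamma_pos_of_pos ha) (Real.Gamma_pos_of_pos hc))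
    (Real.Gamma_pos_of_pos (by linarith))

lemma alphaK_pos {D : ℕ} (b1 : Bool) (K : Fin (D - 1) → Bool) : 0 < alphaK b1 K := by
  unfold alphaK
  have h1 : 0 ≤ ∑ j, bitR (K j) := Finset.sum_nonneg fun j _ => bitR_nonneg _
  have h2 := bitR_nonneg b1
  linarith

lemma betaK_pos {D : ℕ} (hD : 2 ≤ D) (b1 : Bool) (K : Fin (D - 1) → Bool) :
    0 < betaK D b1 K := by
  unfold betaK
  have h1 : (∑ j, bitR (K j)) ≤ (D : ℝ) - 1 := by
    calc (∑ j, bitR (K j)) ≤ ∑ _j : Fin (D - 1), (1 : ℝ) :=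
          Finset.sum_le_sum fun j _ => bitR_le_one _
      _ = ((D - 1 : ℕ) : ℝ) := by simp
      _ = (D : ℝ) - 1 := by
          rw [Nat.cast_sub (by omega)]; norm_num
  have h2 := bitR_le_one b1
  linarith

/-- for `D ≥ 2` and any pattern `b ∈ {0,1}^D`, the denominator
`Σ_L Ψ(b,L)·B(α_L,β_L)` is positive and the normalized weights
`Ψ_w(b,K) = Ψ(b,K)B(α_K,β_K)/Σ_L Ψ(b,L)B(α_L,β_L)` sum to one. -/
theorem psi_weights_sum_to_one (D : ℕ) (hD : 2 ≤ D) (μ σ : ℝ) (hσ : 0 < σ)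
    (b : Fin D → Bool) :
    (0 < ∑ L : Fin (D - 1) → Bool,
        Psi b L * betaFn (alphaK (b ⟨0, by omega⟩) L) (betaK D (b ⟨0, by omega⟩) L)) ∧
    (∑ K : Fin (D - 1) → Bool,
        Psi b K * betaFn (alphaK (b ⟨0, by omega⟩) K) (betaK D (b ⟨0, by omega⟩) K) /
          ∑ L : Fin (D - 1) → Bool,
            Psi b L * betaFn (alphaK (b ⟨0, by omega⟩) L) (betaK D (b ⟨0, by omega⟩) L)) = 1 := by
  have hpos : 0 < ∑ L : Fin (D - 1) → Bool,
      Psi b L * betaFn (alphaK (b ⟨0, by omega⟩) L) (betaK D (b ⟨0, by omega⟩) L) := by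
    apply Finset.sum_pos'
    · intro L _
      exact mul_nonneg (Psi_nonneg _ _)
        (betaFn_pos (alphaK_pos _ _) (betaK_pos hD _ _)).le
    · obtain ⟨m, rfl⟩ : ∃ m, D = m + 2 := ⟨D - 2, by omega⟩
      refine ⟨fun _ => b ⟨0, by omega⟩, Finset.mem_univ _, ?_⟩
      apply mul_pos _ (betaFn_pos (alphaK_pos _ _) (betaK_pos hD _ _))
      have hb0 : b ⟨0, by omega⟩ = b 0 := congrArg b (Fin.ext (by simp))
      rw [hb0]
      exact Psi_const_pos b
  refine ⟨hpos, ?_⟩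
  rw [← Finset.sum_div, div_self hpos.ne']
end

section
/- Let D ≥ 1, μ ∈ ℝ, σ > 0, and let X₀, X₁, …, X_D be i.i.d. with distribution N(μ, σ²). Then for every real t, P( X₀ < X₁ < ⋯ < X_D and X_D ≤ t ) = Φ((t−μ)/σ)^{D+1} / (D+1)!. In particular P(X₀ < X₁ < ⋯ < X_D) = 1/(D+1)! and the conditional density of X_D given the all-increasing dynamic pattern X₀ < X₁ < ⋯ < X_D is the beta-normal density BN(D+1, 1, μ, σ)(x) = (D+1)·Φ((x−μ)/σ)^D · (1/σ) φ((x−μ)/σ). -/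
open MeasureTheory ProbabilityTheory

/-!
The tuple `(X₀, …, X_D)` has law `ν^{⊗(D+1)}` with `ν` Gaussian, and the event in question is the
preimage of `{x | x strictly increasing, all xᵢ ≤ t}`. For an atomless `ν` almost every tuple has
distinct entries, so the `(D+1)!` sets `{x | x ∘ e strictly increasing}`, `e` a permutation,
cover almost everything; they are disjoint (`e` must be the sorting permutation of `x`) and have
equal measure by symmetry of the product measure. Hence each has measure `ν(univ)^{D+1}/(D+1)!`,
and restricting `ν` to `Iic t` gives `ν(Iic t)^{D+1}/(D+1)! = Φ((t-μ)/σ)^{D+1}/(D+1)!`.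
-/

open Set Function
open scoped ENNReal NNReal Nat

theorem Tuple.eq_sort_of_strictMono_comp {α : Type*} [LinearOrder α] {n : ℕ} {f : Fin n → α}
    {σ : Equiv.Perm (Fin n)} (h : StrictMono (f ∘ σ)) : σ = Tuple.sort f :=
  Tuple.eq_sort_iff.2 ⟨h.monotone, fun _ _ hij hf => absurd hf (h hij).ne⟩

theorem measurableSet_setOf_strictMono {ι : Type*} [Preorder ι] [Countable ι] :
    MeasurableSet {x : ι → ℝ | StrictMono x} := by
  simp only [StrictMono, ofPred_forall]
  exact .iInter fun a => .iInter fun b => .iInter fun _ =>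
    measurableSet_lt (measurable_pi_apply a) (measurable_pi_apply b)

namespace MeasureTheory.Measure

variable (ν : Measure ℝ) [SigmaFinite ν]

theorem pi_setOf_apply_eq_apply_eq_zero {ι : Type*} [Fintype ι] [DecidableEq ι]
    [NullSingletonClass ν] {i j : ι} (hij : i ≠ j) :
    Measure.pi (fun _ : ι => ν) {x | x i = x j} = 0 := by
  -- Split off coordinate `i`: for fixed other coordinates, the slice is a single point.
  let U : Set (({k // k ≠ i} → ℝ) × ({k // ¬k ≠ i} → ℝ)) :=
    {p | p.2 ⟨i, not_not.2 rfl⟩ = p.1 ⟨j, hij.symm⟩}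
  have hU : MeasurableSet U :=
    measurableSet_eq_fun ((measurable_pi_apply _).comp measurable_snd)
      ((measurable_pi_apply _).comp measurable_fst)
  have hpre : {x : ι → ℝ | x i = x j} = MeasurableEquiv.piEquivPiSubtypeProd _ (· ≠ i) ⁻¹' U :=
    rfl
  rw [hpre, (measurePreserving_piEquivPiSubtypeProd _ _).measure_preimage hU.nullMeasurableSet,
    prod_apply hU]
  simp [U, pi_hyperplane]

theorem ae_injective_pi {ι : Type*} [Fintype ι] [NullSingletonClass ν] :
    ∀ᵐ x ∂Measure.pi (fun _ : ι => ν), Injective x := by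
  classical
  have hpair : ∀ i j : ι, ∀ᵐ x ∂Measure.pi (fun _ : ι => ν), x i = x j → i = j := by
    intro i j
    by_cases hij : i = j
    · exact .of_forall fun _ _ => hij
    · exact measure_mono_null (fun x hx => by_contra fun h => hx fun hx' => absurd hx' h)
        (pi_setOf_apply_eq_apply_eq_zero ν hij)
  filter_upwards [ae_all_iff.2 fun i => ae_all_iff.2 (hpair i)] with x hx i j using hx i j

theorem pi_setOf_strictMono [NullSingletonClass ν] (n : ℕ) :
    Measure.pi (fun _ : Fin n => ν) {x | StrictMono x} = ν univ ^ n / n ! := by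
  set π := Measure.pi fun _ : Fin n => ν
  let S : Equiv.Perm (Fin n) → Set (Fin n → ℝ) := fun σ => {x | StrictMono (x ∘ σ)}
  have hS_meas : ∀ σ, MeasurableSet (S σ) := fun σ =>
    measurableSet_setOf_strictMono.preimage (by fun_prop : Measurable fun x : Fin n → ℝ => x ∘ σ)
  have hS_disj : Pairwise (Disjoint on S) := fun σ τ hστ =>
    disjoint_left.2 fun x hσ hτ =>
      hστ ((Tuple.eq_sort_of_strictMono_comp hσ).trans (Tuple.eq_sort_of_strictMono_comp hτ).symm)
  have hS_cover : ∀ᵐ x ∂π, x ∈ ⋃ σ, S σ := (ae_injective_pi ν).mono fun x hx =>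
    mem_iUnion.2 ⟨Tuple.sort x,
      (Tuple.monotone_sort x).strictMono_of_injective (hx.comp (Tuple.sort x).injective)⟩
  have hS_perm : ∀ σ, π (S σ) = π {x | StrictMono x} := by
    intro σ
    have hcomp : ⇑(MeasurableEquiv.piCongrLeft (fun _ => ℝ) σ.symm) = fun x => x ∘ σ := by
      ext x b; simp [MeasurableEquiv.piCongrLeft, Equiv.piCongrLeft_apply]
    have h := (measurePreserving_piCongrLeft (fun _ : Fin n => ν) σ.symm).measure_preimage_equiv
      {x | StrictMono x}
    rwa [hcomp] at h
  have hsum : ν univ ^ n = n ! * π {x | StrictMono x} :=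
    calc ν univ ^ n = π univ := by simp [π, Measure.pi_univ]
      _ = π (⋃ σ, S σ) := (measure_congr (Filter.eventuallyEq_univ.2 hS_cover)).symm
      _ = ∑ σ, π (S σ) := by rw [measure_iUnion hS_disj hS_meas, tsum_fintype]
      _ = n ! * π {x | StrictMono x} := by simp [hS_perm, Fintype.card_perm]
  rw [ENNReal.eq_div_iff (by exact_mod_cast n.factorial_ne_zero) (ENNReal.natCast_ne_top _),
    hsum]

theorem pi_setOf_strictMono_inter_pi [NullSingletonClass ν] (n : ℕ) (C : Set ℝ) :
    Measure.pi (fun _ : Fin n => ν) ({x | StrictMono x} ∩ univ.pi fun _ => C) = ν C ^ n / n ! := by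
  rw [← restrict_apply measurableSet_setOf_strictMono, restrict_pi_pi, pi_setOf_strictMono,
    restrict_apply_univ]

end MeasureTheory.Measure

theorem stdCDF_eq_gaussianReal_Iic (x : ℝ) : stdCDF x = (gaussianReal 0 1).real (Iic x) := by
  have hpdf : gaussianPDFReal 0 1 = stdPhi := by
    ext t; simp [gaussianPDFReal, stdPhi, div_eq_inv_mul]
  rw [measureReal_def, gaussianReal_apply_eq_integral 0 one_ne_zero, ENNReal.toReal_ofReal
    (setIntegral_nonneg measurableSet_Iic fun t _ => gaussianPDFReal_nonneg 0 1 t), hpdf, stdCDF]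

theorem gaussianReal_map_standardize {μ σ : ℝ} {v : ℝ≥0} (hv : (v : ℝ) = σ ^ 2) (hσ : σ ≠ 0) :
    (gaussianReal μ v).map (fun x => (x - μ) / σ) = gaussianReal 0 1 := by
  have hcomp : (fun x => (x - μ) / σ) = (· / σ) ∘ (· - μ) := rfl
  rw [hcomp, ← Measure.map_map (by fun_prop) (by fun_prop), gaussianReal_map_sub_const,
    gaussianReal_map_div_const, sub_self, zero_div]
  congr 1
  ext; simp [hv, hσ]

theorem gaussianReal_real_Iic {μ σ : ℝ} {v : ℝ≥0} (hv : (v : ℝ) = σ ^ 2) (hσ : 0 < σ) (t : ℝ) :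
    (gaussianReal μ v).real (Iic t) = stdCDF ((t - μ) / σ) := by
  have hpre : (fun x => (x - μ) / σ) ⁻¹' Iic ((t - μ) / σ) = Iic t := by
    ext x; simp [div_le_div_iff_of_pos_right hσ]
  rw [stdCDF_eq_gaussianReal_Iic, ← gaussianReal_map_standardize (μ := μ) hv hσ.ne',
    map_measureReal_apply (by fun_prop) measurableSet_Iic, hpre]

theorem all_increasing_pattern_general
    {Ω : Type*} [MeasurableSpace Ω] (P : Measure Ω)
    (D : ℕ) (μ σ : ℝ) (hσ : 0 < σ)
    (X : Fin (D + 1) → Ω → ℝ) (hmeas : ∀ i, Measurable (X i))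
    (hindep : iIndepFun X P)
    (hdist : ∀ i, Measure.map (X i) P = gaussianReal μ ⟨σ ^ 2, sq_nonneg σ⟩) :
    (∀ t : ℝ,
      (P ((⋂ j : Fin D, {ω | X j.castSucc ω < X j.succ ω}) ∩
          {ω | X (Fin.last D) ω ≤ t})).toReal
        = stdCDF ((t - μ) / σ) ^ (D + 1) / (Nat.factorial (D + 1) : ℝ)) ∧
    (P (⋂ j : Fin D, {ω | X j.castSucc ω < X j.succ ω})).toReal
        = 1 / (Nat.factorial (D + 1) : ℝ) := by
  set v : ℝ≥0 := ⟨σ ^ 2, sq_nonneg σ⟩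
  have hv : (v : ℝ) = σ ^ 2 := rfl
  have : NullSingletonClass (gaussianReal μ v) :=
    nullSingletonClass_gaussianReal (by simp [← NNReal.coe_ne_zero, hv, hσ.ne'])
  have hlaw : P.map (fun ω i => X i ω) = Measure.pi fun _ => gaussianReal μ v := by
    simp_rw [hindep.map_fun_eq_pi_map fun i => (hmeas i).aemeasurable, hdist]
  set Y : Ω → Fin (D + 1) → ℝ := fun ω i => X i ω
  have hY : Measurable Y := measurable_pi_lambda _ hmeas
  have hincr : (⋂ j : Fin D, {ω | X j.castSucc ω < X j.succ ω}) = Y ⁻¹' {x | StrictMono x} := by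
    ext ω; simp [Y, Fin.strictMono_iff_lt_succ]
  have hincr_le (t : ℝ) :
      (⋂ j : Fin D, {ω | X j.castSucc ω < X j.succ ω}) ∩ {ω | X (Fin.last D) ω ≤ t}
        = Y ⁻¹' ({x | StrictMono x} ∩ univ.pi fun _ => Iic t) := by
    rw [hincr]
    ext ω
    simp only [mem_inter_iff, mem_preimage, mem_ofPred_eq, mem_univ_pi, mem_Iic]
    exact and_congr_right fun h =>
      ⟨fun hle i => (h.monotone (Fin.le_last i)).trans hle, fun hle => hle _⟩
  refine ⟨fun t => ?_, ?_⟩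
  · rw [hincr_le, ← Measure.map_apply hY
      (measurableSet_setOf_strictMono.inter (.univ_pi fun _ => measurableSet_Iic)), hlaw,
      Measure.pi_setOf_strictMono_inter_pi, ENNReal.toReal_div, ENNReal.toReal_pow,
      ENNReal.toReal_natCast, ← measureReal_def, gaussianReal_real_Iic hv hσ]
  · rw [hincr, ← Measure.map_apply hY measurableSet_setOf_strictMono, hlaw,
      Measure.pi_setOf_strictMono]
    simp

/-- for i.i.d. Gaussian samples `X₀, …, X_D`,
`P(X₀ < X₁ < ⋯ < X_D, X_D ≤ t) = Φ((t-μ)/σ)^{D+1}/(D+1)!` for every real `t`;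
in particular `P(X₀ < ⋯ < X_D) = 1/(D+1)!`, so the conditional density of `X_D`
given the all-increasing pattern is `BN(D+1, 1, μ, σ)(x) = (D+1)Φ((x-μ)/σ)^D (1/σ)φ((x-μ)/σ)`. -/
theorem all_increasing_pattern
    {Ω : Type*} [MeasurableSpace Ω] (P : Measure Ω) [IsProbabilityMeasure P]
    (D : ℕ) (hD : 1 ≤ D) (μ σ : ℝ) (hσ : 0 < σ)
    (X : Fin (D + 1) → Ω → ℝ) (hmeas : ∀ i, Measurable (X i))
    (hindep : iIndepFun X P)
    (hdist : ∀ i, Measure.map (X i) P = gaussianReal μ ⟨σ ^ 2, sq_nonneg σ⟩) :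
    (∀ t : ℝ,
      (P ((⋂ j : Fin D, {ω | X j.castSucc ω < X j.succ ω}) ∩
          {ω | X (Fin.last D) ω ≤ t})).toReal
        = stdCDF ((t - μ) / σ) ^ (D + 1) / (Nat.factorial (D + 1) : ℝ)) ∧
    (P (⋂ j : Fin D, {ω | X j.castSucc ω < X j.succ ω})).toReal
        = 1 / (Nat.factorial (D + 1) : ℝ) :=
  all_increasing_pattern_general P D μ σ hσ X hmeas hindep hdist
end
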